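/- Let q = p^l be a power of a prime p with l ≥ 1, and let Q be a Sylow p-subgroup of the symmetric group on q symbols. Then the cycle (1, 2, …, q) does not belong to the commutator subgroup of Q. -/

import Mathlib

/-!
A finite `p`-group `P` is nilpotent, so each maximal subgroup `M` is normal and `P = M ⊔ ⟨g⟩`
for any `g ∉ M`, whence `P ⧸ M` is abelian and `[P, P]` lies in the Frattini subgroup. The
powers of the `q`-cycle act transitively on the `q` symbols, so together with a point stabiliser
they generate `P`. If the cycle were in `[P, P]`, the stabiliser would generate `P` modulo the
Frattini subgroup, hence be all of `P`, which is absurd since `q > 1`.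
-/

open Subgroup MulAction

variable {G : Type*} [Group G]

theorem Subgroup.commutator_le_of_isCoatom [Group.IsNilpotent G] {M : Subgroup G}
    (hM : IsCoatom M) : _root_.commutator G ≤ M := by
  obtain ⟨g, -, hg⟩ := SetLike.exists_of_lt hM.lt_top
  have := Group.normalizerCondition_of_isNilpotent.normal_of_coatom M hM
  refine Normal.commutator_le_of_self_sup_commutative_eq_top (H := zpowers g)
    (hM.2 _ (left_lt_sup.2 ?_)) inferInstance
  rwa [zpowers_le]

theorem commutator_le_frattini [Group.IsNilpotent G] : _root_.commutator G ≤ frattini G :=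
  le_iInf₂ fun _ ↦ commutator_le_of_isCoatom

theorem MulAction.sup_stabilizer_eq_top {α : Type*} [MulAction G α] (H : Subgroup G)
    [IsPretransitive H α] (a : α) : H ⊔ stabilizer G a = ⊤ := by
  refine eq_top_iff.2 fun g _ ↦ ?_
  obtain ⟨h, hh⟩ := exists_smul_eq H a (g • a)
  have : (h : G)⁻¹ * g ∈ stabilizer G a := by
    rw [mem_stabilizer_iff, mul_smul, ← hh, Subgroup.smul_def, inv_smul_smul]
  simpa using mul_mem_sup h.2 this

theorem not_le_commutator_of_isPretransitive [Group.IsNilpotent G] [IsCoatomic (Subgroup G)]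
    {α : Type*} [MulAction G α] [Nontrivial α] (H : Subgroup G) [IsPretransitive H α] :
    ¬ H ≤ _root_.commutator G := by
  intro hH
  obtain ⟨a⟩ : Nonempty α := inferInstance
  have hS : stabilizer G a = ⊤ := frattini_nongenerating <| top_le_iff.1 <| by
    grw [← sup_stabilizer_eq_top H a, hH, commutator_le_frattini, sup_comm]
  have hfix (x : α) : x = a := by
    obtain ⟨h, rfl⟩ := exists_smul_eq H a x
    exact (mem_stabilizer_iff (G := G)).1 (hS ▸ mem_top (h : G))
  exact not_subsingleton α ⟨fun x y ↦ (hfix x).trans (hfix y).symm⟩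

theorem sameCycle_finRotate {n : ℕ} (x y : Fin n) : (finRotate n).SameCycle x y := by
  rcases lt_or_ge n 2 with hn | hn
  · have : Subsingleton (Fin n) := Fin.subsingleton_iff_le_one.2 (by omega)
    exact Subsingleton.elim x y ▸ Equiv.Perm.SameCycle.refl _ _
  · have hmoves (z : Fin n) : finRotate n z ≠ z := by
      rw [← Equiv.Perm.mem_support, support_finRotate_of_le hn]
      exact Finset.mem_univ z
    exact (isCycle_finRotate_of_le hn).sameCycle (hmoves x) (hmoves y)

/-- The `q`-cycle `(1 2 … q)` (`q = pˡ`, `l ≥ 1`) is not in the commutator subgroup of a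
Sylow `p`-subgroup of the symmetric group on `q` symbols containing it. -/
theorem cycle_not_in_commutator_of_sylow {p l : ℕ} (hp : p.Prime) (hl : 1 ≤ l)
    (q : ℕ) (hq : q = p ^ l) (Q : Sylow p (Equiv.Perm (Fin q)))
    (hmem : finRotate q ∈ Q) :
    finRotate q ∉ ⁅(Q : Subgroup (Equiv.Perm (Fin q))), (Q : Subgroup (Equiv.Perm (Fin q)))⁆ := by
  have := Fact.mk hp
  have : Group.IsNilpotent Q := Q.isPGroup'.isNilpotent
  have : Nontrivial (Fin q) :=
    Fin.nontrivial_iff_two_le.2 (hq ▸ hp.two_le.trans (Nat.le_self_pow (by omega) p))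
  set σ : Q := ⟨finRotate q, hmem⟩
  have : IsPretransitive (zpowers σ) (Fin q) :=
    ⟨fun x y ↦ let ⟨n, hn⟩ := sameCycle_finRotate x y; ⟨⟨σ ^ n, zpow_mem_zpowers σ n⟩, hn⟩⟩
  rw [← map_subtype_commutator, show finRotate q = (Q : Subgroup _).subtype σ from rfl,
    mem_map_iff_mem (subtype_injective _)]
  exact fun h ↦ not_le_commutator_of_isPretransitive (α := Fin q) (zpowers σ) (zpowers_le.2 h)
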